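/- Let m, n ≥ 2 and consider the matching sequence on Δᵗ₂(K_m □ P_n). A face σ of Δᵗ₂(K_m □ P_n) satisfies σ ∈ 𝒞_n if and only if σ^c = {(0,0), (i,j−1), (i,j)} for some 1 ≤ i ≤ m−1 and 1 ≤ j ≤ n−1. In particular, 𝒞_n has exactly (m−1)(n−1) elements, each of dimension mn−4 as a simplex. -/
import Mathlib


/-- Adjacency in the Cartesian product `K_m □ P_n`, on the vertex set
`{0,…,m-1} × {0,…,n-1} ⊆ ℕ × ℕ`: distinct `(i₁,j₁)`, `(i₂,j₂)` are adjacent iff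
(`i₁ = i₂` and `|j₁ - j₂| = 1`) or (`j₁ = j₂` and `i₁ ≠ i₂`). -/
def adjKmPn (m n : ℕ) (u v : ℕ × ℕ) : Prop :=
  u.1 < m ∧ u.2 < n ∧ v.1 < m ∧ v.2 < n ∧ u ≠ v ∧
    ((u.1 = v.1 ∧ (u.2 + 1 = v.2 ∨ v.2 + 1 = u.2)) ∨ (u.2 = v.2 ∧ u.1 ≠ v.1))

/-- The total 2-cut complex `Δᵗ₂(K_m □ P_n)`: faces are the subsets
`σ ⊆ {0,…,m-1} × {0,…,n-1}` whose complement contains a disconnected 2-set,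
i.e. two distinct nonadjacent vertices. -/
def facesKmPn (m n : ℕ) : Set (Finset (ℕ × ℕ)) :=
  {σ | σ ⊆ Finset.range m ×ˢ Finset.range n ∧
    ∃ u ∈ (Finset.range m ×ˢ Finset.range n) \ σ,
      ∃ v ∈ (Finset.range m ×ˢ Finset.range n) \ σ, u ≠ v ∧ ¬ adjKmPn m n u v}

/-- The matching sequence `𝒞₀, 𝒞₁, …` on `Δᵗ₂(K_m □ P_n)`, using the vertices
`(0,0), (0,1), …`: `𝒞₀` is the set of all faces, and `𝒞_{j+1}` consists of those
`σ ∈ 𝒞_j` lying in no pair of the matching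
`M_j = { {σ∖{(0,j)}, σ∪{(0,j)}} : both σ∖{(0,j)} ∈ 𝒞_j and σ∪{(0,j)} ∈ 𝒞_j }`
(a face `σ` lies in such a pair iff both `σ∖{(0,j)} ∈ 𝒞_j` and `σ∪{(0,j)} ∈ 𝒞_j`). -/
def matchSeqKmPn (m n : ℕ) : ℕ → Set (Finset (ℕ × ℕ))
  | 0 => facesKmPn m n
  | (j + 1) => {σ ∈ matchSeqKmPn m n j |
      ¬(σ.erase (0, j) ∈ matchSeqKmPn m n j ∧ insert (0, j) σ ∈ matchSeqKmPn m n j)}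

namespace S18

def VV (m n : ℕ) : Finset (ℕ × ℕ) := Finset.range m ×ˢ Finset.range n

def Clq (m n : ℕ) (S : Finset (ℕ × ℕ)) : Prop :=
  ∀ u ∈ S, ∀ v ∈ S, u ≠ v → adjKmPn m n u v

lemma mem_VV {m n : ℕ} {v : ℕ × ℕ} : v ∈ VV m n ↔ v.1 < m ∧ v.2 < n := by
  simp [VV, Finset.mem_product]

lemma adj_iff {m n : ℕ} {u v : ℕ × ℕ} (hu : u ∈ VV m n) (hv : v ∈ VV m n) (huv : u ≠ v) :
    adjKmPn m n u v ↔
      ((u.1 = v.1 ∧ (u.2 + 1 = v.2 ∨ v.2 + 1 = u.2)) ∨ (u.2 = v.2 ∧ u.1 ≠ v.1)) := by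
  rw [mem_VV] at hu hv
  simp [adjKmPn, hu.1, hu.2, hv.1, hv.2, huv]

lemma face_iff {m n : ℕ} {σ : Finset (ℕ × ℕ)} :
    σ ∈ facesKmPn m n ↔ σ ⊆ VV m n ∧ ¬ Clq m n (VV m n \ σ) := by
  unfold facesKmPn Clq VV
  constructor
  · rintro ⟨hsub, u, hu, v, hv, huv, hadj⟩
    exact ⟨hsub, fun h => hadj (h u hu v hv huv)⟩
  · rintro ⟨hsub, h⟩
    refine ⟨hsub, ?_⟩
    push_neg at h
    obtain ⟨u, hu, v, hv, huv, hadj⟩ := h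
    exact ⟨u, hu, v, hv, huv, hadj⟩

/-- structure of cliques -/
lemma clq_struct {m n : ℕ} {S : Finset (ℕ × ℕ)} (hV : S ⊆ VV m n) (hS : Clq m n S) :
    (∀ v ∈ S, ∀ w ∈ S, v.2 = w.2) ∨ ∃ i j : ℕ, S = {(i,j),(i,j+1)} := by
  by_cases hcol : ∀ v ∈ S, ∀ w ∈ S, v.2 = w.2
  · exact Or.inl hcol
  · right
    push_neg at hcol
    obtain ⟨u, hu, v, hv, huv2⟩ := hcol
    have huv : u ≠ v := fun h => huv2 (by rw [h])
    have hadj := hS u hu v hv huv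
    rw [adj_iff (hV hu) (hV hv) huv] at hadj
    have h1 : u.1 = v.1 ∧ (u.2 + 1 = v.2 ∨ v.2 + 1 = u.2) := by
      rcases hadj with h | h
      · exact h
      · exact absurd h.1 huv2
    -- wlog u.2 + 1 = v.2
    rcases h1.2 with h2 | h2
    · refine ⟨u.1, u.2, ?_⟩
      have hv' : v = (u.1, u.2 + 1) := by
        rw [Prod.ext_iff]; exact ⟨h1.1.symm, h2.symm⟩
      ext w
      simp only [Finset.mem_insert, Finset.mem_singleton]
      constructor
      · intro hw
        by_contra hne
        push_neg at hne
        have hwu : w ≠ u := fun h => hne.1 (by rw [h])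
        have hwv : w ≠ v := fun h => hne.2 (by rw [h, hv'])
        have a1 := hS w hw u hu hwu
        have a2 := hS w hw v hv hwv
        rw [adj_iff (hV hw) (hV hu) hwu] at a1
        rw [adj_iff (hV hw) (hV hv) hwv] at a2
        rw [hv'] at a2
        have hne1 : w.1 ≠ u.1 ∨ w.2 ≠ u.2 := by
          by_contra h; push_neg at h; exact hne.1 (Prod.ext_iff.mpr ⟨h.1, h.2⟩)
        have hne2 : w.1 ≠ u.1 ∨ w.2 ≠ u.2 + 1 := by
          by_contra h; push_neg at h; exact hne.2 (Prod.ext_iff.mpr ⟨h.1, h.2⟩)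
        simp only [] at a2
        omega
      · rintro (hw | hw)
        · rwa [show w = u from Prod.ext_iff.mpr ⟨by rw [hw], by rw [hw]⟩]
        · rw [show w = v by rw [hv', Prod.ext_iff]; exact ⟨by rw [hw], by rw [hw]⟩]; exact hv
    · refine ⟨v.1, v.2, ?_⟩
      have hu' : u = (v.1, v.2 + 1) := by
        rw [Prod.ext_iff]; exact ⟨h1.1, h2.symm⟩
      ext w
      simp only [Finset.mem_insert, Finset.mem_singleton]
      constructor
      · intro hw
        by_contra hne
        push_neg at hne
        have hwv : w ≠ v := fun h => hne.1 (by rw [h])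
        have hwu : w ≠ u := fun h => hne.2 (by rw [h, hu'])
        have a1 := hS w hw v hv hwv
        have a2 := hS w hw u hu hwu
        rw [adj_iff (hV hw) (hV hv) hwv] at a1
        rw [adj_iff (hV hw) (hV hu) hwu] at a2
        rw [hu'] at a2
        have hne1 : w.1 ≠ v.1 ∨ w.2 ≠ v.2 := by
          by_contra h; push_neg at h; exact hne.1 (Prod.ext_iff.mpr ⟨h.1, h.2⟩)
        have hne2 : w.1 ≠ v.1 ∨ w.2 ≠ v.2 + 1 := by
          by_contra h; push_neg at h; exact hne.2 (Prod.ext_iff.mpr ⟨h.1, h.2⟩)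
        simp only [] at a2
        omega
      · rintro (hw | hw)
        · rwa [show w = v from Prod.ext_iff.mpr ⟨by rw [hw], by rw [hw]⟩]
        · rw [show w = u by rw [hu', Prod.ext_iff]; exact ⟨by rw [hw], by rw [hw]⟩]; exact hu

end S18

namespace S18

def QQ (k : ℕ) (K : Finset (ℕ × ℕ)) : Prop :=
  (∃ i j : ℕ, K = {(i,j),(i,j+1)} ∧ (1 ≤ i ∨ k ≤ j)) ∨
  (∃ c : ℕ, K.Nonempty ∧ (∀ v ∈ K, v.2 = c) ∧ (k + 1 ≤ c ∨ (c = k ∧ K ≠ {(0,k)})))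

def PP (m n k : ℕ) (σ : Finset (ℕ × ℕ)) : Prop :=
  σ ⊆ VV m n ∧ (0,0) ∉ σ ∧ ¬ Clq m n (VV m n \ σ) ∧
    Clq m n ((VV m n \ σ).erase (0,0)) ∧ QQ k ((VV m n \ σ).erase (0,0))

lemma clq_mono {m n : ℕ} {S T : Finset (ℕ × ℕ)} (h : S ⊆ T) (hT : Clq m n T) :
    Clq m n S := fun u hu v hv huv => hT u (h hu) v (h hv) huv

lemma compl_erase {m n : ℕ} {σ : Finset (ℕ × ℕ)} {x : ℕ × ℕ} (hx : x ∈ VV m n) :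
    VV m n \ (σ.erase x) = insert x (VV m n \ σ) := by
  ext y
  simp only [Finset.mem_sdiff, Finset.mem_erase, Finset.mem_insert, not_and_or, not_not]
  constructor
  · rintro ⟨hy, h | h⟩
    · exact Or.inl h
    · exact Or.inr ⟨hy, h⟩
  · rintro (h | ⟨h1, h2⟩)
    · exact ⟨h ▸ hx, Or.inl h⟩
    · exact ⟨h1, Or.inr h2⟩

lemma compl_insert {m n : ℕ} {σ : Finset (ℕ × ℕ)} {x : ℕ × ℕ} :
    VV m n \ (insert x σ) = (VV m n \ σ).erase x := by
  ext y
  simp only [Finset.mem_sdiff, Finset.mem_erase, Finset.mem_insert, not_or]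
  tauto

lemma adj_coords {m n : ℕ} {u v : ℕ × ℕ} (h : adjKmPn m n u v) :
    (u.1 = v.1 ∧ (u.2 + 1 = v.2 ∨ v.2 + 1 = u.2)) ∨ (u.2 = v.2 ∧ u.1 ≠ v.1) :=
  h.2.2.2.2.2

lemma not_clq_of {m n : ℕ} {S : Finset (ℕ × ℕ)} {u v : ℕ × ℕ} (hu : u ∈ S) (hv : v ∈ S)
    (hne : u ≠ v) (h : ¬ adjKmPn m n u v) : ¬ Clq m n S :=
  fun hc => h (hc u hu v hv hne)

lemma ne_of_snd {u v : ℕ × ℕ} (h : u.2 ≠ v.2) : u ≠ v := fun he => h (by rw [he])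

lemma ne_of_fst {u v : ℕ × ℕ} (h : u.1 ≠ v.1) : u ≠ v := fun he => h (by rw [he])

lemma adj_col {m n : ℕ} {u v : ℕ × ℕ} (hu : u ∈ VV m n) (hv : v ∈ VV m n) (hne : u ≠ v)
    (h : u.2 = v.2) : adjKmPn m n u v := by
  rw [adj_iff hu hv hne]
  refine Or.inr ⟨h, fun h1 => hne (Prod.ext_iff.mpr ⟨h1, h⟩)⟩

/-- if all of S lies in one column and S ⊆ V then S is a clique -/
lemma clq_of_col {m n : ℕ} {S : Finset (ℕ × ℕ)} (hV : S ⊆ VV m n) {c : ℕ}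
    (h : ∀ v ∈ S, v.2 = c) : Clq m n S :=
  fun u hu v hv hne => adj_col (hV hu) (hV hv) hne ((h u hu).trans (h v hv).symm)

lemma Q1_of {m n : ℕ} {σ : Finset (ℕ × ℕ)} (hm : 1 ≤ m) (hn : 1 ≤ n)
    (hsub : σ ⊆ VV m n) (h0 : (0,0) ∉ σ) (hnc : ¬ Clq m n (VV m n \ σ))
    (hK : Clq m n ((VV m n \ σ).erase (0,0))) : QQ 1 ((VV m n \ σ).erase (0,0)) := by
  set K := (VV m n \ σ).erase (0,0) with hKdef
  have h00V : ((0:ℕ),(0:ℕ)) ∈ VV m n := mem_VV.mpr ⟨hm, hn⟩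
  have h00c : ((0:ℕ),(0:ℕ)) ∈ VV m n \ σ := Finset.mem_sdiff.mpr ⟨h00V, h0⟩
  have hKV : K ⊆ VV m n := (Finset.erase_subset _ _).trans (Finset.sdiff_subset)
  have hcompl : VV m n \ σ = insert ((0:ℕ),(0:ℕ)) K := (Finset.insert_erase h00c).symm
  have h00K : ((0:ℕ),(0:ℕ)) ∉ K := Finset.notMem_erase _ _
  rcases clq_struct hKV hK with hcol | ⟨i, j, hij⟩
  · -- column case
    have hne : K.Nonempty := by
      rcases Finset.eq_empty_or_nonempty K with he | hne
      · exfalso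
        apply hnc
        rw [hcompl, he]
        intro u hu v hv huv
        simp only [Finset.mem_insert, Finset.notMem_empty, or_false] at hu hv
        exact absurd (hu.trans hv.symm) huv
      · exact hne
    obtain ⟨w, hw⟩ := hne
    have hallc : ∀ v ∈ K, v.2 = w.2 := fun v hv => hcol v hv w hw
    have hc1 : 1 ≤ w.2 := by
      by_contra hc
      push_neg at hc
      apply hnc
      rw [hcompl]
      apply clq_of_col (by rw [← hcompl]; exact Finset.sdiff_subset) (c := 0)
      intro v hv
      rcases Finset.mem_insert.mp hv with h | h
      · rw [h]
      · rw [hallc v h]; omega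
    right
    refine ⟨w.2, ⟨w, hw⟩, hallc, ?_⟩
    by_cases hc2 : 2 ≤ w.2
    · exact Or.inl hc2
    · have hc1' : w.2 = 1 := by omega
      refine Or.inr ⟨hc1', fun hKe => ?_⟩
      apply hnc
      rw [hcompl, hKe]
      intro u hu v hv huv
      have h01V : ((0:ℕ),(1:ℕ)) ∈ VV m n := hKV (hKe ▸ Finset.mem_singleton_self _)
      simp only [Finset.mem_insert, Finset.mem_singleton] at hu hv
      have : (u = (0,0) ∧ v = (0,1)) ∨ (u = (0,1) ∧ v = (0,0)) := by
        rcases hu with h | h <;> rcases hv with h' | h' <;>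
          first
          | (exfalso; exact huv (h.trans h'.symm))
          | tauto
      rcases this with ⟨h1, h2⟩ | ⟨h1, h2⟩ <;> subst h1 <;> subst h2
      · rw [adj_iff h00V h01V huv]; left; exact ⟨rfl, Or.inl rfl⟩
      · rw [adj_iff h01V h00V huv]; left; exact ⟨rfl, Or.inr rfl⟩
  · -- edge case
    left
    refine ⟨i, j, hij, ?_⟩
    by_contra hcon
    push_neg at hcon
    have : i = 0 ∧ j = 0 := by omega
    apply h00K
    rw [hij, this.1, this.2]
    exact Finset.mem_insert_self _ _

end S18

namespace S18

lemma base {m n : ℕ} (hm : 1 ≤ m) (hn : 1 ≤ n) :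
    matchSeqKmPn m n 1 = {σ | PP m n 1 σ} := by
  have h00V : ((0:ℕ),(0:ℕ)) ∈ VV m n := mem_VV.mpr ⟨hm, hn⟩
  ext σ
  show σ ∈ facesKmPn m n ∧
      ¬(σ.erase (0,0) ∈ facesKmPn m n ∧ insert (0,0) σ ∈ facesKmPn m n) ↔ PP m n 1 σ
  constructor
  · rintro ⟨hface, hnot⟩
    obtain ⟨hsub, hnc⟩ := face_iff.mp hface
    by_cases h0 : ((0:ℕ),(0:ℕ)) ∈ σ
    · exfalso
      apply hnot
      constructor
      · rw [face_iff]
        refine ⟨(Finset.erase_subset _ _).trans hsub, ?_⟩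
        rw [compl_erase h00V]
        exact fun h => hnc (clq_mono (Finset.subset_insert _ _) h)
      · rwa [Finset.insert_eq_self.mpr h0]
    · have hK : Clq m n ((VV m n \ σ).erase (0,0)) := by
        by_contra hKnc
        apply hnot
        refine ⟨by rwa [Finset.erase_eq_of_notMem h0], ?_⟩
        rw [face_iff]
        refine ⟨Finset.insert_subset h00V hsub, ?_⟩
        rwa [compl_insert]
      exact ⟨hsub, h0, hnc, hK, Q1_of hm hn hsub h0 hnc hK⟩
  · rintro ⟨hsub, h0, hnc, hK, hQ⟩
    refine ⟨face_iff.mpr ⟨hsub, hnc⟩, ?_⟩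
    rintro ⟨_, hins⟩
    rw [face_iff] at hins
    exact hins.2 (by rw [compl_insert]; exact hK)

end S18

namespace S18

lemma not_adj {m n : ℕ} {a b c d : ℕ}
    (h : ¬((a = c ∧ (b + 1 = d ∨ d + 1 = b)) ∨ (b = d ∧ a ≠ c))) :
    ¬ adjKmPn m n (a,b) (c,d) := fun hadj => h (adj_coords hadj)

lemma Qmono {k : ℕ} {K : Finset (ℕ × ℕ)} (h : QQ (k+1) K) : QQ k K := by
  rcases h with ⟨i, j, hij, hc⟩ | ⟨c, hne, hcol, hc⟩
  · exact Or.inl ⟨i, j, hij, by omega⟩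
  · refine Or.inr ⟨c, hne, hcol, Or.inl (by omega)⟩

lemma pair_mem_decomp {x : ℕ × ℕ} {a b : ℕ × ℕ} (h : x ∈ ({a, b} : Finset (ℕ × ℕ))) :
    x = a ∨ x = b := by
  rcases Finset.mem_insert.mp h with h | h
  · exact Or.inl h
  · exact Or.inr (Finset.mem_singleton.mp h)

lemma PP_iff_succ {m n k : ℕ} {σ : Finset (ℕ × ℕ)} :
    PP m n (k+1) σ ↔ PP m n k σ ∧ QQ (k+1) ((VV m n \ σ).erase (0,0)) := by
  unfold PP
  constructor
  · rintro ⟨h1, h2, h3, h4, h5⟩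
    exact ⟨⟨h1, h2, h3, h4, Qmono h5⟩, h5⟩
  · rintro ⟨⟨h1, h2, h3, h4, _⟩, h5⟩
    exact ⟨h1, h2, h3, h4, h5⟩

lemma step_key {m n k : ℕ} (hm : 1 ≤ m) (hk : 1 ≤ k) (hkn : k < n)
    {σ : Finset (ℕ × ℕ)} (hσ : PP m n k σ) :
    (PP m n k (σ.erase (0,k)) ∧ PP m n k (insert (0,k) σ)) ↔
      ¬ QQ (k+1) ((VV m n \ σ).erase (0,0)) := by
  obtain ⟨hsub, h0, hnc, hK, hQ⟩ := hσ
  set K := (VV m n \ σ).erase (0,0) with hKdef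
  have hn1 : 1 ≤ n := by omega
  have h00V : ((0:ℕ),(0:ℕ)) ∈ VV m n := mem_VV.mpr ⟨hm, hn1⟩
  have h0kV : ((0:ℕ),k) ∈ VV m n := mem_VV.mpr ⟨hm, hkn⟩
  have hk00 : ((0:ℕ),k) ≠ ((0:ℕ),(0:ℕ)) := fun h => by
    have := congrArg Prod.snd h; simp at this; omega
  have h00c : ((0:ℕ),(0:ℕ)) ∈ VV m n \ σ := Finset.mem_sdiff.mpr ⟨h00V, h0⟩
  have hKV : K ⊆ VV m n := (Finset.erase_subset _ _).trans (Finset.sdiff_subset)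
  have hcompl : VV m n \ σ = insert ((0:ℕ),(0:ℕ)) K := (Finset.insert_erase h00c).symm
  have h00K : ((0:ℕ),(0:ℕ)) ∉ K := Finset.notMem_erase _ _
  by_cases hB : ((0:ℕ),k) ∈ K
  · -- Case B : (0,k) in the complement; σ always dies, and QQ (k+1) K fails
    have h0kσ : ((0:ℕ),k) ∉ σ := (Finset.mem_sdiff.mp (Finset.mem_of_mem_erase hB)).2
    have hComplIns : VV m n \ (insert ((0:ℕ),k) σ) = (VV m n \ σ).erase (0,k) :=
      compl_insert
    have hKIns : (VV m n \ (insert ((0:ℕ),k) σ)).erase (0,0) = K.erase (0,k) := by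
      rw [hComplIns, Finset.erase_right_comm, ← hKdef]
    -- useful witness analysis from hQ
    have hwit : (K = {((0:ℕ),k), ((0:ℕ),k+1)}) ∨
        (∃ w ∈ K, w ≠ ((0:ℕ),k) ∧ w.2 = k ∧ w.1 ≠ 0) := by
      rcases hQ with ⟨i, j, hij, hc⟩ | ⟨c, hne, hcol, hc⟩
      · left
        rcases pair_mem_decomp (hij ▸ hB) with h | h
        · have h1 := congrArg Prod.fst h; have h2 := congrArg Prod.snd h
          simp at h1 h2
          have hi : i = 0 := h1.symm
          have hjk : j = k := h2.symm
          rw [hij, hi, hjk]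
        · exfalso
          have h1 := congrArg Prod.fst h; have h2 := congrArg Prod.snd h
          simp at h1 h2
          rcases hc with hc | hc <;> omega
      · right
        have hck : c = k := by have := hcol _ hB; simpa using this.symm
        have hKne : K ≠ {((0:ℕ),k)} := by
          rcases hc with hc | hc
          · omega
          · exact hck ▸ hc.2
        have : ∃ w ∈ K, w ≠ ((0:ℕ),k) := by
          by_contra hcon
          push_neg at hcon
          exact hKne (Finset.eq_singleton_iff_nonempty_unique_mem.mpr ⟨hne, hcon⟩)
        obtain ⟨w, hw, hwne⟩ := this
        refine ⟨w, hw, hwne, hck ▸ hcol w hw, fun h1 => ?_⟩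
        exact hwne (Prod.ext_iff.mpr ⟨h1, hck ▸ hcol w hw⟩)
    constructor
    · intro _
      -- show ¬ QQ (k+1) K
      intro hq
      rcases hq with ⟨i, j, hij, hc⟩ | ⟨c, hne, hcol, hc⟩
      · rcases pair_mem_decomp (hij ▸ hB) with h | h <;>
          · have h1 := congrArg Prod.fst h; have h2 := congrArg Prod.snd h
            simp at h1 h2
            rcases hc with hc | hc <;> omega
      · have hck : c = k := by have := hcol _ hB; simpa using this.symm
        rcases hc with hc | hc <;> omega
    · intro _
      constructor
      · rw [Finset.erase_eq_of_notMem h0kσ]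
        exact ⟨hsub, h0, hnc, hK, hQ⟩
      · refine ⟨Finset.insert_subset h0kV hsub, ?_, ?_, ?_, ?_⟩
        · intro h
          rcases Finset.mem_insert.mp h with h | h
          · exact hk00 h.symm
          · exact h0 h
        · -- complement of insert is not a clique
          rw [hComplIns]
          have h00mem : ((0:ℕ),(0:ℕ)) ∈ (VV m n \ σ).erase (0,k) :=
            Finset.mem_erase.mpr ⟨hk00.symm, h00c⟩
          rcases hwit with hKe | ⟨w, hw, hwne, hw2, hw1⟩
          · have hmemK : ((0:ℕ),k+1) ∈ K := by
              rw [hKe]; exact Finset.mem_insert.mpr (Or.inr (Finset.mem_singleton_self _))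
            have hmem : ((0:ℕ),k+1) ∈ (VV m n \ σ).erase (0,k) := by
              refine Finset.mem_erase.mpr ⟨?_, Finset.mem_of_mem_erase hmemK⟩
              intro h; have := congrArg Prod.snd h; simp at this
            refine not_clq_of h00mem hmem ?_ (not_adj ?_)
            · intro h; have := congrArg Prod.snd h; simp at this
            · omega
          · have hmem : w ∈ (VV m n \ σ).erase (0,k) :=
              Finset.mem_erase.mpr ⟨hwne, Finset.mem_of_mem_erase hw⟩
            have : w = (w.1, w.2) := rfl
            rw [this] at hmem
            refine not_clq_of h00mem hmem ?_ (not_adj ?_)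
            · intro h; have := congrArg Prod.fst h; simp at this; omega
            · omega
        · rw [hKIns]
          exact clq_mono (Finset.erase_subset _ _) hK
        · rw [hKIns]
          rcases hwit with hKe | ⟨w, hw, hwne, hw2, hw1⟩
          · right
            refine ⟨k+1, ?_, ?_, Or.inl (le_refl _)⟩
            · refine ⟨((0:ℕ),k+1), Finset.mem_erase.mpr ⟨?_, ?_⟩⟩
              · intro h; have := congrArg Prod.snd h; simp at this
              · rw [hKe]; exact Finset.mem_insert.mpr (Or.inr (Finset.mem_singleton_self _))
            · intro v hv
              have hvK := Finset.mem_of_mem_erase hv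
              have hvne := (Finset.mem_erase.mp hv).1
              rw [hKe] at hvK
              rcases pair_mem_decomp hvK with h | h
              · exact absurd h hvne
              · rw [h]
          · right
            refine ⟨k, ⟨w, Finset.mem_erase.mpr ⟨hwne, hw⟩⟩, ?_, Or.inr ⟨rfl, ?_⟩⟩
            · intro v hv
              rcases hQ with ⟨i, j, hij, hc⟩ | ⟨c, hne, hcol, hc⟩
              · exfalso
                rcases pair_mem_decomp (hij ▸ hw) with h | h <;>
                  rcases pair_mem_decomp (hij ▸ hB) with h' | h' <;>
                  · have a1 := congrArg Prod.fst h; have a2 := congrArg Prod.snd h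
                    have b1 := congrArg Prod.fst h'; have b2 := congrArg Prod.snd h'
                    simp at a1 a2 b1 b2
                    omega
              · have hck : c = k := by have := hcol _ hB; simpa using this.symm
                exact hck ▸ hcol v (Finset.mem_of_mem_erase hv)
            · intro h
              exact Finset.notMem_erase ((0:ℕ),k) K (h ▸ Finset.mem_singleton_self _)
  · -- Case A : (0,k) ∈ σ
    have h0kσ : ((0:ℕ),k) ∈ σ := by
      by_contra h
      exact hB (Finset.mem_erase.mpr ⟨hk00, Finset.mem_sdiff.mpr ⟨h0kV, h⟩⟩)
    have hKer : (VV m n \ (σ.erase (0,k))).erase (0,0) = insert ((0:ℕ),k) K := by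
      rw [compl_erase h0kV, hcompl, Finset.erase_insert_of_ne hk00, Finset.erase_insert h00K]
    rw [Finset.insert_eq_self.mpr h0kσ]
    have hred : (PP m n k (σ.erase (0,k)) ∧ PP m n k σ) ↔
        (Clq m n (insert ((0:ℕ),k) K) ∧ QQ k (insert ((0:ℕ),k) K)) := by
      constructor
      · rintro ⟨⟨_, _, _, h4, h5⟩, -⟩
        rw [hKer] at h4 h5
        exact ⟨h4, h5⟩
      · rintro ⟨h4, h5⟩
        refine ⟨⟨(Finset.erase_subset _ _).trans hsub,
          fun h => h0 (Finset.mem_of_mem_erase h), ?_,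
          by rwa [hKer], by rwa [hKer]⟩, ⟨hsub, h0, hnc, hK, hQ⟩⟩
        rw [compl_erase h0kV]
        exact fun h => hnc (clq_mono (Finset.subset_insert _ _) h)
    rw [hred]
    rcases hQ with ⟨i, j, hij, hc⟩ | ⟨c, ⟨w, hw⟩, hcol, hc⟩
    · -- edge case: survives, QQ (k+1) holds
      have h1 : ((0:ℕ),k) ≠ (i,j) := fun h => hB (by
        rw [hij, h]; exact Finset.mem_insert_self _ _)
      have h2 : ((0:ℕ),k) ≠ (i,j+1) := fun h => hB (by
        rw [hij, h]; exact Finset.mem_insert.mpr (Or.inr (Finset.mem_singleton_self _)))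
      have hc1 : ¬(0 = i ∧ k = j) := fun hh => h1 (Prod.ext_iff.mpr ⟨hh.1, hh.2⟩)
      have hc2 : ¬(0 = i ∧ k = j+1) := fun hh => h2 (Prod.ext_iff.mpr ⟨hh.1, hh.2⟩)
      apply iff_of_false
      · rintro ⟨hclq, -⟩
        have hK1 : (i,j) ∈ insert ((0:ℕ),k) K := Finset.mem_insert_of_mem
          (by rw [hij]; exact Finset.mem_insert_self _ _)
        have hK2 : (i,j+1) ∈ insert ((0:ℕ),k) K := Finset.mem_insert_of_mem
          (by rw [hij]; exact Finset.mem_insert.mpr (Or.inr (Finset.mem_singleton_self _)))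
        by_cases hi : 1 ≤ i
        · by_cases hkj : k = j
          · exact absurd (hclq _ (Finset.mem_insert_self _ _) _ hK2
              (fun h => by have := congrArg Prod.fst h; simp at this; omega))
              (not_adj (by omega))
          · exact absurd (hclq _ (Finset.mem_insert_self _ _) _ hK1
              (fun h => by have := congrArg Prod.fst h; simp at this; omega))
              (not_adj (by omega))
        · have hi0 : i = 0 := by omega
          subst hi0
          have hkj : k + 1 ≤ j := by
            rcases hc with hc | hc <;> omega
          exact absurd (hclq _ (Finset.mem_insert_self _ _) _ hK2
            (fun h => by have := congrArg Prod.snd h; simp at this; omega))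
            (not_adj (by omega))
      · intro h
        apply h
        left
        refine ⟨i, j, hij, ?_⟩
        rcases hc with hc | hc
        · exact Or.inl hc
        · by_cases hi : 1 ≤ i
          · exact Or.inl hi
          · exact Or.inr (by omega)
    · -- column case
      obtain ⟨w1, w2⟩ := w
      have hwc : w2 = c := by simpa using hcol _ hw
      by_cases hck : c = k
      · subst hck
        apply iff_of_true
        · constructor
          · apply clq_of_col (Finset.insert_subset h0kV hKV) (c := c)
            intro v hv
            rcases Finset.mem_insert.mp hv with h | h
            · rw [h]
            · exact hcol v h
          · right
            refine ⟨c, ⟨(0,c), Finset.mem_insert_self _ _⟩, ?_, Or.inr ⟨rfl, ?_⟩⟩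
            · intro v hv
              rcases Finset.mem_insert.mp hv with h | h
              · rw [h]
              · exact hcol v h
            · intro h
              have hwmem : (w1, w2) ∈ insert ((0:ℕ),c) K := Finset.mem_insert_of_mem hw
              rw [h] at hwmem
              have := Finset.mem_singleton.mp hwmem
              rw [this] at hw
              exact hB hw
        · intro hq
          rcases hq with ⟨i, j, hij, _⟩ | ⟨c', hne', hcol', hc'⟩
          · have e1 : (i,j) ∈ K := hij ▸ Finset.mem_insert_self _ _
            have e2 : (i,j+1) ∈ K := hij ▸ Finset.mem_insert.mpr
              (Or.inr (Finset.mem_singleton_self _))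
            have a1 : j = c := by simpa using hcol _ e1
            have a2 : j + 1 = c := by simpa using hcol _ e2
            omega
          · have a1 : w2 = c' := by simpa using hcol' _ hw
            rcases hc' with hc' | hc' <;> omega
      · have hck2 : k + 1 ≤ c := by rcases hc with h | h <;> omega
        by_cases hsing : K = {((0:ℕ),c)} ∧ c = k + 1
        · obtain ⟨hKe, hc_eq⟩ := hsing
          have h0cV : ((0:ℕ),c) ∈ VV m n := hKV (hKe ▸ Finset.mem_singleton_self _)
          apply iff_of_true
          · constructor
            · rw [hKe]
              intro u hu v hv huv
              rcases pair_mem_decomp hu with h | h <;> rcases pair_mem_decomp hv with h' | h'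
              · exact absurd (h.trans h'.symm) huv
              · subst h; subst h'
                rw [adj_iff h0kV h0cV huv]
                exact Or.inl ⟨rfl, Or.inl (by omega)⟩
              · subst h; subst h'
                rw [adj_iff h0cV h0kV huv]
                exact Or.inl ⟨rfl, Or.inr (by omega)⟩
              · exact absurd (h.trans h'.symm) huv
            · left
              refine ⟨0, k, ?_, Or.inr (le_refl _)⟩
              rw [hKe, hc_eq]
          · intro hq
            rw [hKe] at hq
            rcases hq with ⟨i, j, hij, _⟩ | ⟨c', hne', hcol', hc'⟩
            · have e1 : (i,j) ∈ ({((0:ℕ),c)} : Finset (ℕ × ℕ)) :=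
                hij ▸ Finset.mem_insert_self _ _
              have e2 : (i,j+1) ∈ ({((0:ℕ),c)} : Finset (ℕ × ℕ)) :=
                hij ▸ Finset.mem_insert.mpr (Or.inr (Finset.mem_singleton_self _))
              have a1 := congrArg Prod.snd (Finset.mem_singleton.mp e1)
              have a2 := congrArg Prod.snd (Finset.mem_singleton.mp e2)
              simp at a1 a2
              omega
            · have a1 : c = c' := by
                simpa using hcol' _ (Finset.mem_singleton_self _)
              rcases hc' with hc' | hc'
              · omega
              · exact hc'.2 (by rw [hc_eq])
        · apply iff_of_false
          · rintro ⟨hclq, -⟩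
            by_cases hc2 : k + 2 ≤ c
            · have hwmem : (w1, w2) ∈ insert ((0:ℕ),k) K := Finset.mem_insert_of_mem hw
              exact absurd (hclq _ (Finset.mem_insert_self _ _) _ hwmem
                (fun h => by have := congrArg Prod.snd h; simp at this; omega))
                (not_adj (by omega))
            · have hc_eq : c = k + 1 := by omega
              have hKne : K ≠ {((0:ℕ),c)} := fun h => hsing ⟨h, hc_eq⟩
              have : ∃ w' ∈ K, w' ≠ ((0:ℕ),c) := by
                by_contra hcon
                push_neg at hcon
                exact hKne (Finset.eq_singleton_iff_nonempty_unique_mem.mpr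
                  ⟨⟨(w1,w2), hw⟩, hcon⟩)
              obtain ⟨w', hw', hwne'⟩ := this
              obtain ⟨v1, v2⟩ := w'
              have hv2 : v2 = c := by simpa using hcol _ hw'
              have hv1 : v1 ≠ 0 := by
                intro h
                exact hwne' (Prod.ext_iff.mpr ⟨h, hv2⟩)
              have hvmem : (v1, v2) ∈ insert ((0:ℕ),k) K := Finset.mem_insert_of_mem hw'
              exact absurd (hclq _ (Finset.mem_insert_self _ _) _ hvmem
                (fun h => by have := congrArg Prod.fst h; simp at this; omega))
                (not_adj (by omega))
          · intro h
            apply h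
            right
            refine ⟨c, ⟨(w1,w2), hw⟩, hcol, ?_⟩
            by_cases hc2 : k + 2 ≤ c
            · exact Or.inl hc2
            · have hc_eq : c = k + 1 := by omega
              refine Or.inr ⟨hc_eq, fun h' => hsing ⟨?_, hc_eq⟩⟩
              rw [h', hc_eq]

end S18

namespace S18

lemma step {m n k : ℕ} (hm : 1 ≤ m) (hk : 1 ≤ k) (hkn : k < n)
    (ih : matchSeqKmPn m n k = {σ | PP m n k σ}) :
    matchSeqKmPn m n (k+1) = {σ | PP m n (k+1) σ} := by
  ext σ
  show σ ∈ matchSeqKmPn m n k ∧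
      ¬(σ.erase (0,k) ∈ matchSeqKmPn m n k ∧ insert (0,k) σ ∈ matchSeqKmPn m n k) ↔ _
  rw [ih]
  simp only [Set.mem_setOf_eq]
  constructor
  · rintro ⟨hp, hnot⟩
    rw [PP_iff_succ]
    refine ⟨hp, ?_⟩
    by_contra hq
    exact hnot ((step_key hm hk hkn hp).mpr hq)
  · intro hp1
    rw [PP_iff_succ] at hp1
    obtain ⟨hp, hq⟩ := hp1
    exact ⟨hp, fun hboth => ((step_key hm hk hkn hp).mp hboth) hq⟩

lemma C_eq {m n : ℕ} (hm : 1 ≤ m) (hn : 1 ≤ n) :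
    ∀ k, 1 ≤ k → k ≤ n → matchSeqKmPn m n k = {σ | PP m n k σ} := by
  intro k
  induction k with
  | zero => omega
  | succ k ih =>
    intro _ hkn
    rcases Nat.eq_zero_or_pos k with h | h
    · subst h; exact base hm hn
    · exact step hm h (by omega) (ih h (by omega))

lemma triple_mem_decomp {x a b c : ℕ × ℕ} (h : x ∈ ({a, b, c} : Finset (ℕ × ℕ))) :
    x = a ∨ x = b ∨ x = c := by
  rcases Finset.mem_insert.mp h with h | h
  · exact Or.inl h
  · rcases Finset.mem_insert.mp h with h | h
    · exact Or.inr (Or.inl h)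
    · exact Or.inr (Or.inr (Finset.mem_singleton.mp h))

lemma final_char {m n : ℕ} (hm : 2 ≤ m) (hn : 2 ≤ n) {σ : Finset (ℕ × ℕ)} :
    PP m n n σ ↔ σ ⊆ VV m n ∧ ∃ i j : ℕ, 1 ≤ i ∧ i ≤ m - 1 ∧ 1 ≤ j ∧ j ≤ n - 1 ∧
      VV m n \ σ = {((0:ℕ),(0:ℕ)), (i, j-1), (i,j)} := by
  constructor
  · rintro ⟨hsub, h0, hnc, hK, hQ⟩
    refine ⟨hsub, ?_⟩
    have h00V : ((0:ℕ),(0:ℕ)) ∈ VV m n := mem_VV.mpr ⟨by omega, by omega⟩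
    have h00c : ((0:ℕ),(0:ℕ)) ∈ VV m n \ σ := Finset.mem_sdiff.mpr ⟨h00V, h0⟩
    have hKV : (VV m n \ σ).erase (0,0) ⊆ VV m n :=
      (Finset.erase_subset _ _).trans (Finset.sdiff_subset)
    have hcompl : VV m n \ σ = insert ((0:ℕ),(0:ℕ)) ((VV m n \ σ).erase (0,0)) :=
      (Finset.insert_erase h00c).symm
    rcases hQ with ⟨i, j, hij, hc⟩ | ⟨c, ⟨w, hw⟩, hcol, hc⟩
    · have hjV : (i,j+1) ∈ VV m n := hKV (hij ▸ Finset.mem_insert.mpr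
        (Or.inr (Finset.mem_singleton_self _)))
      have hiV : (i,j) ∈ VV m n := hKV (hij ▸ Finset.mem_insert_self _ _)
      rw [mem_VV] at hjV hiV
      simp only at hjV hiV
      have hi1 : 1 ≤ i := by rcases hc with h | h <;> omega
      refine ⟨i, j+1, hi1, by omega, by omega, by omega, ?_⟩
      rw [hcompl, hij]
      simp only [Nat.add_sub_cancel]
    · exfalso
      have hwV : w ∈ VV m n := hKV hw
      rw [mem_VV] at hwV
      have := hcol w hw
      rcases hc with h | h <;> omega
  · rintro ⟨hsub, i, j, hi1, hi2, hj1, hj2, heq⟩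
    have h00c : ((0:ℕ),(0:ℕ)) ∈ VV m n \ σ := heq ▸ Finset.mem_insert_self _ _
    have hijc : (i,j) ∈ VV m n \ σ := heq ▸ Finset.mem_insert.mpr (Or.inr
      (Finset.mem_insert.mpr (Or.inr (Finset.mem_singleton_self _))))
    have hij1c : (i,j-1) ∈ VV m n \ σ := heq ▸ Finset.mem_insert.mpr
      (Or.inr (Finset.mem_insert_self _ _))
    have h0 : ((0:ℕ),(0:ℕ)) ∉ σ := (Finset.mem_sdiff.mp h00c).2
    have hijV : (i,j) ∈ VV m n := (Finset.mem_sdiff.mp hijc).1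
    have hij1V : (i,j-1) ∈ VV m n := (Finset.mem_sdiff.mp hij1c).1
    have h00ne : ((0:ℕ),(0:ℕ)) ∉ ({(i,j-1),(i,j)} : Finset (ℕ × ℕ)) := by
      intro h
      rcases pair_mem_decomp h with h | h <;>
        · have := congrArg Prod.fst h; simp at this; omega
    have hKeq : (VV m n \ σ).erase (0,0) = {(i,j-1),(i,j)} := by
      rw [heq]
      exact Finset.erase_insert h00ne
    refine ⟨hsub, h0, ?_, ?_, ?_⟩
    · refine not_clq_of h00c hijc ?_ (not_adj ?_)
      · intro h; have := congrArg Prod.fst h; simp at this; omega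
      · omega
    · rw [hKeq]
      intro u hu v hv huv
      have hne : (i,j-1) ≠ (i,j) := by
        intro h; have := congrArg Prod.snd h; simp at this; omega
      rcases pair_mem_decomp hu with h | h <;> rcases pair_mem_decomp hv with h' | h'
      · exact absurd (h.trans h'.symm) huv
      · subst h; subst h'
        rw [adj_iff hij1V hijV huv]
        exact Or.inl ⟨rfl, Or.inl (by omega)⟩
      · subst h; subst h'
        rw [adj_iff hijV hij1V huv]
        exact Or.inl ⟨rfl, Or.inr (by omega)⟩
      · exact absurd (h.trans h'.symm) huv
    · rw [hKeq]
      left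
      refine ⟨i, j-1, ?_, Or.inl hi1⟩
      have : j - 1 + 1 = j := by omega
      rw [this]

end S18


open S18 in
/-- Theorem 3.14 (main step): let `m, n ≥ 2`.  A face `σ` of `Δᵗ₂(K_m □ P_n)`
satisfies `σ ∈ 𝒞_n` iff `σᶜ = {(0,0), (i,j-1), (i,j)}` for some `1 ≤ i ≤ m-1`
and `1 ≤ j ≤ n-1`.  In particular, `𝒞_n` has exactly `(m-1)(n-1)` elements,
each of dimension `|σ| - 1 = mn - 4` as a simplex. -/
theorem stmt18 (m n : ℕ) (hm : 2 ≤ m) (hn : 2 ≤ n) :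
    (∀ σ ∈ facesKmPn m n,
      (σ ∈ matchSeqKmPn m n n ↔
        ∃ i j : ℕ, 1 ≤ i ∧ i ≤ m - 1 ∧ 1 ≤ j ∧ j ≤ n - 1 ∧
          (Finset.range m ×ˢ Finset.range n) \ σ =
            {((0 : ℕ), (0 : ℕ)), (i, j - 1), (i, j)})) ∧
    (matchSeqKmPn m n n).ncard = (m - 1) * (n - 1) ∧
    ∀ σ ∈ matchSeqKmPn m n n, (σ.card : ℤ) - 1 = (m : ℤ) * (n : ℤ) - 4 := by
  have hm1 : 1 ≤ m := by omega
  have hn1 : 1 ≤ n := by omega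
  have hmain : matchSeqKmPn m n n = {σ | PP m n n σ} := C_eq hm1 hn1 n hn1 le_rfl
  have tripleV : ∀ i j : ℕ, 1 ≤ i → i ≤ m - 1 → 1 ≤ j → j ≤ n - 1 →
      ({((0:ℕ),(0:ℕ)), (i, j-1), (i,j)} : Finset (ℕ × ℕ)) ⊆ VV m n := by
    intro i j hi1 hi2 hj1 hj2 x hx
    rcases triple_mem_decomp hx with h | h | h <;> subst h <;>
      exact mem_VV.mpr ⟨by simp; omega, by simp; omega⟩
  refine ⟨?_, ?_, ?_⟩
  · intro σ hσ
    rw [hmain]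
    simp only [Set.mem_setOf_eq]
    rw [final_char hm hn]
    have hsub := (face_iff.mp hσ).1
    exact ⟨fun h => h.2, fun h => ⟨hsub, h⟩⟩
  · -- cardinality of the set
    set S := ((Finset.Icc 1 (m-1)) ×ˢ (Finset.Icc 1 (n-1))).image
      (fun p : ℕ × ℕ => VV m n \ {((0:ℕ),(0:ℕ)), (p.1, p.2 - 1), (p.1, p.2)}) with hS
    have hset : matchSeqKmPn m n n = ↑S := by
      rw [hmain]
      ext σ
      simp only [Set.mem_setOf_eq, Finset.mem_coe]
      constructor
      · intro hσ
        obtain ⟨hsub, i, j, hi1, hi2, hj1, hj2, heq⟩ := (final_char hm hn).mp hσ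
        have hσeq : σ = VV m n \ {((0:ℕ),(0:ℕ)), (i, j-1), (i,j)} := by
          rw [← heq]
          exact (Finset.sdiff_sdiff_eq_self hsub).symm
        rw [hS, Finset.mem_image]
        exact ⟨(i,j), Finset.mem_product.mpr ⟨Finset.mem_Icc.mpr ⟨hi1, hi2⟩,
          Finset.mem_Icc.mpr ⟨hj1, hj2⟩⟩, hσeq.symm⟩
      · intro hσ
        rw [hS, Finset.mem_image] at hσ
        obtain ⟨⟨i, j⟩, hpmem, heq⟩ := hσ
        rw [Finset.mem_product, Finset.mem_Icc, Finset.mem_Icc] at hpmem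
        apply (final_char hm hn).mpr
        refine ⟨by rw [← heq]; exact Finset.sdiff_subset, i, j,
          hpmem.1.1, hpmem.1.2, hpmem.2.1, hpmem.2.2, ?_⟩
        rw [← heq, Finset.sdiff_sdiff_eq_self
          (tripleV i j hpmem.1.1 hpmem.1.2 hpmem.2.1 hpmem.2.2)]
    rw [hset, Set.ncard_coe_finset, hS]
    rw [Finset.card_image_of_injOn, Finset.card_product, Nat.card_Icc, Nat.card_Icc]
    · have e1 : m - 1 + 1 - 1 = m - 1 := by omega
      have e2 : n - 1 + 1 - 1 = n - 1 := by omega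
      rw [e1, e2]
    · rintro ⟨i1, j1⟩ h1 ⟨i2, j2⟩ h2 heq'
      simp only [Finset.coe_product, Set.mem_prod, Finset.mem_coe, Finset.mem_Icc] at h1 h2
      simp only at heq'
      have hT1 := tripleV i1 j1 h1.1.1 h1.1.2 h1.2.1 h1.2.2
      have hT2 := tripleV i2 j2 h2.1.1 h2.1.2 h2.2.1 h2.2.2
      have hTT : ({((0:ℕ),(0:ℕ)), (i1, j1-1), (i1,j1)} : Finset (ℕ × ℕ)) =
          {((0:ℕ),(0:ℕ)), (i2, j2-1), (i2,j2)} := by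
        rw [← Finset.sdiff_sdiff_eq_self hT1, ← Finset.sdiff_sdiff_eq_self hT2, heq']
      have e1 : (i1, j1) ∈ ({((0:ℕ),(0:ℕ)), (i2, j2-1), (i2,j2)} : Finset (ℕ × ℕ)) := by
        rw [← hTT]
        exact Finset.mem_insert.mpr (Or.inr (Finset.mem_insert.mpr
          (Or.inr (Finset.mem_singleton_self _))))
      have e2 : (i2, j2) ∈ ({((0:ℕ),(0:ℕ)), (i1, j1-1), (i1,j1)} : Finset (ℕ × ℕ)) := by
        rw [hTT]
        exact Finset.mem_insert.mpr (Or.inr (Finset.mem_insert.mpr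
          (Or.inr (Finset.mem_singleton_self _))))
      have d1 : (i1 = 0 ∧ j1 = 0) ∨ (i1 = i2 ∧ j1 = j2 - 1) ∨ (i1 = i2 ∧ j1 = j2) := by
        rcases triple_mem_decomp e1 with h | h | h <;> rw [Prod.mk.injEq] at h <;> tauto
      have d2 : (i2 = 0 ∧ j2 = 0) ∨ (i2 = i1 ∧ j2 = j1 - 1) ∨ (i2 = i1 ∧ j2 = j1) := by
        rcases triple_mem_decomp e2 with h | h | h <;> rw [Prod.mk.injEq] at h <;> tauto
      have hcoord : i1 = i2 ∧ j1 = j2 := by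
        have b1 := h1.1.1; have b2 := h1.2.1; have b3 := h2.1.1; have b4 := h2.2.1
        omega
      rw [Prod.mk.injEq]
      exact hcoord
  · intro σ hσ
    rw [hmain] at hσ
    obtain ⟨hsub, i, j, hi1, hi2, hj1, hj2, heq⟩ := (final_char hm hn).mp hσ
    have hVc : (VV m n).card = m * n := by
      rw [VV, Finset.card_product, Finset.card_range, Finset.card_range]
    have hTc : ({((0:ℕ),(0:ℕ)), (i, j-1), (i,j)} : Finset (ℕ × ℕ)).card = 3 := by
      rw [Finset.card_eq_three]
      refine ⟨_, _, _, ?_, ?_, ?_, rfl⟩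
      · intro h; rw [Prod.mk.injEq] at h; omega
      · intro h; rw [Prod.mk.injEq] at h; omega
      · intro h; rw [Prod.mk.injEq] at h; omega
    have hadd := Finset.card_sdiff_add_card_eq_card hsub
    rw [heq, hTc, hVc] at hadd
    have hz : ((3 : ℕ) + σ.card : ℤ) = (m : ℤ) * (n : ℤ) := by exact_mod_cast hadd
    push_cast at hz
    linarith
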